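/- arXiv:2209.04767 — 2 statements merged into one kernel-verified Lean document; each statement's English description precedes it below -/
import Mathlib

section
/- Let Q : ℝ^d → ℝ be a positive Schwartz function solving −ΔQ + Q − Q^p = 0 pointwise on ℝ^d. Then the energy of Q satisfies E(Q) = ((d(p−1)−4)/(2d(p−1))) · ∫ |∇Q|² dx; in particular E(Q) > 0 and the virial functional vanishes at Q: K(Q) = 0. -/
open MeasureTheory

/-- The Laplacian of a real-valued function on `ℝ^d`. -/
noncomputable def lapR {d : ℕ} (f : EuclideanSpace ℝ (Fin d) → ℝ)
    (x : EuclideanSpace ℝ (Fin d)) : ℝ :=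
  ∑ i : Fin d,
    fderiv ℝ (fun y => fderiv ℝ f y (EuclideanSpace.single i 1)) x (EuclideanSpace.single i 1)

/-- The energy `E(f) = (1/2)∫|∇f|² - (1/(p+1))∫|f|^{p+1}`. -/
noncomputable def energy {d : ℕ} (p : ℝ) (f : EuclideanSpace ℝ (Fin d) → ℂ) : ℝ :=
  (1 / 2) * (∫ x, ‖fderiv ℝ f x‖ ^ 2) - (1 / (p + 1)) * ∫ x, ‖f x‖ ^ (p + 1)

/-- The virial functional `K(f) = ∫|∇f|² - (d(p-1)/(2(p+1)))∫|f|^{p+1}`. -/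
noncomputable def virialK {d : ℕ} (p : ℝ) (f : EuclideanSpace ℝ (Fin d) → ℂ) : ℝ :=
  (∫ x, ‖fderiv ℝ f x‖ ^ 2) - ((d : ℝ) * (p - 1) / (2 * (p + 1))) * ∫ x, ‖f x‖ ^ (p + 1)

/-!
Write `T = ∫ |∇Q|²`, `M = ∫ Q²` and `P = ∫ Q^{p+1}`. Testing `ΔQ = Q - Q^p` against `Q` gives
`T = P - M`. Testing it against the Pohozaev multiplier `x · ∇Q` gives
`((d - 2)/2) T = -(d/2) M + (d/(p+1)) P`: every term is reduced by integration by parts to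
`∫ x · ∇F = -d ∫ F`, with `F = Q²`, `Q^{p+1}` and `(∂ᵢQ)²`, the last one after commuting
`∂ᵢ` past `x · ∇` (`[∂ᵢ, x · ∇] = ∂ᵢ`, by symmetry of second derivatives). Eliminating `M` gives
`T = d(p-1)/(2(p+1)) P`, which turns `E(Q)` into the stated multiple of `T` and makes `K(Q)`
vanish; `T > 0` since a Schwartz function with vanishing gradient is zero.
-/

open LineDeriv Laplacian Module

namespace SchwartzMap

section Euler

variable {E F : Type*} [NormedAddCommGroup E] [NormedSpace ℝ E]
  [NormedAddCommGroup F] [NormedSpace ℝ F]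

/-- The Euler operator `f ↦ x · ∇f`. -/
noncomputable def euler (f : 𝓢(E, F)) : 𝓢(E, F) :=
  bilinLeftCLM (ContinuousLinearMap.id ℝ (E →L[ℝ] F)) Function.HasTemperateGrowth.id
    (fderivCLM ℝ E F f)

@[simp]
theorem euler_apply (f : 𝓢(E, F)) (x : E) : euler f x = fderiv ℝ f x x := rfl

theorem lineDerivOp_euler (f : 𝓢(E, F)) (v : E) :
    ∂_{v} (euler f) = ∂_{v} f + euler (∂_{v} f) := by
  ext x
  change fderiv ℝ (fun y => fderiv ℝ f y y) x v =
    fderiv ℝ f x v + fderiv ℝ (fun y => fderiv ℝ f y v) x x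
  have hf' : HasFDerivAt (fderiv ℝ f) (fderiv ℝ (fderiv ℝ f) x) x :=
    (fderivCLM ℝ E F f).hasFDerivAt x
  have hsymm : IsSymmSndFDerivAt ℝ f x :=
    (f.smooth 2).contDiffAt.isSymmSndFDerivAt (by simp)
  have hdiag := (hf'.clm_apply (hasFDerivAt_id x)).fderiv
  have hpartial := (hf'.clm_apply (hasFDerivAt_const v x)).fderiv
  simp only [id_eq] at hdiag
  rw [hdiag, hpartial]
  simp [hsymm.eq x v]

end Euler

section NormedSpace

variable {E : Type*} [NormedAddCommGroup E] [NormedSpace ℝ E] [FiniteDimensional ℝ E]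
  [MeasurableSpace E] [BorelSpace E] {μ : Measure E} [μ.IsAddHaarMeasure]

theorem integrable_mul_of_hasTemperateGrowth {g : E → ℝ} (hg : g.HasTemperateGrowth)
    (f : 𝓢(E, ℝ)) : Integrable (fun x => g x * f x) μ :=
  (smulLeftCLM ℝ g f).integrable.congr
    (ae_of_all _ fun x => by rw [smulLeftCLM_apply_apply hg, smul_eq_mul])

theorem integrable_mul (f g : 𝓢(E, ℝ)) : Integrable (fun x => f x * g x) μ :=
  (pairing (ContinuousLinearMap.mul ℝ ℝ) f g).integrable

theorem integrable_sq (f : 𝓢(E, ℝ)) : Integrable (fun x => f x ^ 2) μ := by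
  simpa only [sq] using integrable_mul (μ := μ) f f

theorem integral_mul_lineDerivOp_eq_neg (ℓ : E →L[ℝ] ℝ) (f : 𝓢(E, ℝ)) (v : E) :
    ∫ x, ℓ x * ∂_{v} f x ∂μ = -(ℓ v * ∫ x, f x ∂μ) := by
  have hℓ : ∀ x, fderiv ℝ ℓ x v = ℓ v := fun x => by rw [ContinuousLinearMap.fderiv]
  have h := integral_mul_fderiv_eq_neg_fderiv_mul_of_integrable (μ := μ) (f := ℓ) (g := f) (v := v)
    (by simpa only [hℓ] using (f.integrable (μ := μ)).const_mul (ℓ v))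
    (integrable_mul_of_hasTemperateGrowth ℓ.hasTemperateGrowth (∂_{v} f))
    (integrable_mul_of_hasTemperateGrowth ℓ.hasTemperateGrowth f)
    (fun x _ => ℓ.differentiableAt) (fun x _ => f.differentiableAt)
  simp only [hℓ, integral_const_mul] at h
  exact h

theorem integral_euler (f : 𝓢(E, ℝ)) :
    ∫ x, euler f x ∂μ = -(finrank ℝ E * ∫ x, f x ∂μ) := by
  let b := finBasis ℝ E
  let ℓ i : E →L[ℝ] ℝ := LinearMap.toContinuousLinearMap (b.coord i)
  have hsum : ∀ x, euler f x = ∑ i, ℓ i x * ∂_{b i} f x := fun x => by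
    rw [euler_apply]
    conv_lhs => arg 2; rw [← b.sum_repr x]
    simp only [map_sum, map_smul, smul_eq_mul]
    rfl
  simp_rw [hsum]
  rw [integral_finsetSum _ fun i _ =>
    integrable_mul_of_hasTemperateGrowth (ℓ i).hasTemperateGrowth _]
  simp only [integral_mul_lineDerivOp_eq_neg]
  simp [ℓ]

theorem integral_mul_euler_self (f : 𝓢(E, ℝ)) :
    2 * ∫ x, f x * euler f x ∂μ = -(finrank ℝ E * ∫ x, f x ^ 2 ∂μ) := by
  let g := pairing (ContinuousLinearMap.mul ℝ ℝ) f f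
  have hg : ∀ x, euler g x = 2 * (f x * euler f x) := fun x => by
    change fderiv ℝ (fun y => f y * f y) x x = _
    rw [fderiv_fun_mul f.differentiableAt f.differentiableAt]
    simp only [euler_apply, _root_.add_apply, FunLike.coe_smul, Pi.smul_apply, smul_eq_mul]
    ring
  have h := integral_euler (μ := μ) g
  simp only [hg, integral_const_mul, g, pairing_apply_apply, ContinuousLinearMap.mul_apply',
    ← sq] at h
  exact h

theorem integral_rpow_mul_euler {p : ℝ} (f R : 𝓢(E, ℝ)) (hf : ∀ x, 0 < f x)
    (hR : ∀ x, R x = f x ^ p) :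
    (p + 1) * ∫ x, f x ^ p * euler f x ∂μ = -(finrank ℝ E * ∫ x, f x ^ (p + 1) ∂μ) := by
  let g := pairing (ContinuousLinearMap.mul ℝ ℝ) R f
  have hg_apply : ∀ x, g x = f x ^ (p + 1) := fun x => by
    simp [g, hR, Real.rpow_add_one (hf x).ne']
  have hg : ∀ x, euler g x = (p + 1) * (f x ^ p * euler f x) := fun x => by
    have hchain := (Real.hasDerivAt_rpow_const (p := p + 1) (Or.inl (hf x).ne')).comp_hasFDerivAt
      x (f.hasFDerivAt x)
    rw [euler_apply, show ⇑g = (· ^ (p + 1)) ∘ ⇑f from funext hg_apply, hchain.fderiv]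
    simp only [add_sub_cancel_right, _root_.smul_apply, smul_eq_mul, euler_apply]
    ring
  have h := integral_euler (μ := μ) g
  simp only [hg, integral_const_mul, hg_apply] at h
  exact h

theorem integral_euler_mul_lineDerivOp_lineDerivOp (f : 𝓢(E, ℝ)) (v : E) :
    2 * ∫ x, euler f x * ∂_{v} (∂_{v} f) x ∂μ = (finrank ℝ E - 2) * ∫ x, ∂_{v} f x ^ 2 ∂μ := by
  have h := integral_mul_euler_self (μ := μ) (∂_{v} f)
  rw [integral_mul_lineDerivOp_right_eq_neg_left, lineDerivOp_euler]
  simp_rw [add_apply, add_mul]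
  rw [integral_add (integrable_mul _ _) (integrable_mul _ _)]
  simp_rw [mul_comm (euler (∂_{v} f) _), ← sq]
  linarith

theorem integral_norm_fderiv_sq_pos [Nontrivial E] {f : 𝓢(E, ℝ)} (hf : f ≠ 0) :
    0 < ∫ x, ‖fderiv ℝ f x‖ ^ 2 ∂μ := by
  have hcont : Continuous fun x => ‖fderiv ℝ f x‖ ^ 2 :=
    (fderivCLM ℝ E ℝ f).continuous.norm.pow 2
  have hint : Integrable (fun x => ‖fderiv ℝ f x‖ ^ 2) μ :=
    ((fderivCLM ℝ E ℝ f).memLp 2 μ).integrable_norm_pow two_ne_zero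
  rw [integral_pos_iff_support_of_nonneg (fun x => by positivity) hint]
  refine hcont.isOpen_support.measure_pos μ (Set.nonempty_iff_ne_empty.2 fun hempty => hf ?_)
  have hderiv : ∀ x, fderiv ℝ f x = 0 := fun x => by
    simpa using congrFun (Function.support_eq_empty_iff.1 hempty) x
  have hconst : ∀ x, f x = f 0 := fun x => is_const_of_fderiv_eq_zero f.differentiable hderiv x 0
  have hzero : f 0 = 0 :=
    tendsto_nhds_unique tendsto_const_nhds (f.tendsto_cocompact.congr hconst)
  ext x
  rw [hconst, hzero, zero_apply]

end NormedSpace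

section InnerProductSpace

variable {E : Type*} [NormedAddCommGroup E] [InnerProductSpace ℝ E] [FiniteDimensional ℝ E]
  [MeasurableSpace E] [BorelSpace E] {μ : Measure E} [μ.IsAddHaarMeasure]

theorem integral_norm_fderiv_sq_eq_sum {ι : Type*} [Fintype ι] (b : OrthonormalBasis ι ℝ E)
    (f : 𝓢(E, ℝ)) : ∫ x, ‖fderiv ℝ f x‖ ^ 2 ∂μ = ∑ i, ∫ x, ∂_{b i} f x ^ 2 ∂μ := by
  simp_rw [b.norm_dual]
  exact integral_finsetSum _ fun i _ => integrable_sq (∂_{b i} f)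

theorem integral_mul_laplacian_self (f : 𝓢(E, ℝ)) :
    ∫ x, f x * Δ f x ∂μ = -∫ x, ‖fderiv ℝ f x‖ ^ 2 ∂μ := by
  let b := stdOrthonormalBasis ℝ E
  simp_rw [laplacian_eq_sum b, sum_apply, Finset.mul_sum]
  rw [integral_finsetSum _ fun i _ => integrable_mul _ _, integral_norm_fderiv_sq_eq_sum b,
    ← Finset.sum_neg_distrib]
  refine Finset.sum_congr rfl fun i _ => ?_
  rw [integral_mul_lineDerivOp_right_eq_neg_left]
  simp_rw [sq]

theorem integral_euler_mul_laplacian (f : 𝓢(E, ℝ)) :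
    2 * ∫ x, euler f x * Δ f x ∂μ = (finrank ℝ E - 2) * ∫ x, ‖fderiv ℝ f x‖ ^ 2 ∂μ := by
  let b := stdOrthonormalBasis ℝ E
  simp_rw [laplacian_eq_sum b, sum_apply, Finset.mul_sum]
  rw [integral_finsetSum _ fun i _ => integrable_mul _ _, integral_norm_fderiv_sq_eq_sum b,
    Finset.mul_sum, Finset.mul_sum]
  simp_rw [integral_euler_mul_lineDerivOp_lineDerivOp]

theorem two_mul_integral_norm_fderiv_sq_eq_of_laplacian_eq {p : ℝ} (Q : 𝓢(E, ℝ))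
    (hQ : ∀ x, 0 < Q x) (hQeq : ∀ x, Δ Q x = Q x - Q x ^ p) :
    2 * (p + 1) * ∫ x, ‖fderiv ℝ Q x‖ ^ 2 ∂μ =
      finrank ℝ E * (p - 1) * ∫ x, Q x ^ (p + 1) ∂μ := by
  let R := Q - Δ Q
  have hΔ : ∀ x, Δ Q x = Q x - R x := fun x => by simp [R]
  have hR : ∀ x, R x = Q x ^ p := fun x => by linarith [hΔ x, hQeq x]
  have hQR : ∀ x, Q x * R x = Q x ^ (p + 1) := fun x => by
    rw [hR, Real.rpow_add_one (hQ x).ne', mul_comm]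
  have henergy : ∫ x, Q x * Δ Q x ∂μ = ∫ x, Q x ^ 2 ∂μ - ∫ x, Q x ^ (p + 1) ∂μ := by
    simp_rw [hΔ, mul_sub]
    rw [integral_sub (integrable_mul Q Q) (integrable_mul Q R)]
    simp_rw [hQR, ← sq]
  have hvirial : ∫ x, euler Q x * Δ Q x ∂μ =
      ∫ x, Q x * euler Q x ∂μ - ∫ x, Q x ^ p * euler Q x ∂μ := by
    simp_rw [hΔ, mul_sub]
    rw [integral_sub (integrable_mul _ Q) (integrable_mul _ R)]
    simp_rw [hR, mul_comm (euler Q _)]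
  linear_combination (p + 1) * integral_euler_mul_laplacian (μ := μ) Q - 2 * (p + 1) * hvirial
    - (p + 1) * integral_mul_euler_self (μ := μ) Q + 2 * integral_rpow_mul_euler (μ := μ) Q R hQ hR
    + finrank ℝ E * (p + 1) * (integral_mul_laplacian_self (μ := μ) Q - henergy)

end InnerProductSpace

end SchwartzMap

open SchwartzMap

theorem lapR_eq_laplacian {d : ℕ} (f : 𝓢(EuclideanSpace ℝ (Fin d), ℝ))
    (x : EuclideanSpace ℝ (Fin d)) : lapR f x = Δ f x := by
  rw [laplacian_eq_sum (EuclideanSpace.basisFun (Fin d) ℝ), sum_apply]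
  simp only [EuclideanSpace.basisFun_apply]
  rfl

theorem norm_fderiv_ofReal_comp {E : Type*} [NormedAddCommGroup E] [NormedSpace ℝ E]
    {f : E → ℝ} {x : E} (hf : DifferentiableAt ℝ f x) :
    ‖fderiv ℝ (fun y => (f y : ℂ)) x‖ = ‖fderiv ℝ f x‖ := by
  have h : HasFDerivAt (fun y => (f y : ℂ)) (Complex.ofRealCLM.comp (fderiv ℝ f x)) x :=
    Complex.ofRealCLM.hasFDerivAt.comp x hf.hasFDerivAt
  rw [h.fderiv]
  exact Complex.ofRealLI.norm_toContinuousLinearMap_comp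

theorem energy_ofReal {d : ℕ} (p : ℝ) {f : EuclideanSpace ℝ (Fin d) → ℝ}
    (hf : Differentiable ℝ f) :
    energy p (fun x => (f x : ℂ)) =
      (1 / 2) * (∫ x, ‖fderiv ℝ f x‖ ^ 2) - (1 / (p + 1)) * ∫ x, |f x| ^ (p + 1) := by
  simp [energy, norm_fderiv_ofReal_comp (hf _)]

theorem virialK_ofReal {d : ℕ} (p : ℝ) {f : EuclideanSpace ℝ (Fin d) → ℝ}
    (hf : Differentiable ℝ f) :
    virialK p (fun x => (f x : ℂ)) =
      (∫ x, ‖fderiv ℝ f x‖ ^ 2) - ((d : ℝ) * (p - 1) / (2 * (p + 1))) * ∫ x, |f x| ^ (p + 1) := by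
  simp [virialK, norm_fderiv_ofReal_comp (hf _)]

theorem ground_state_energy_general
    (d : ℕ) (hd : 0 < d) (p : ℝ)
    (hp1 : 1 + 4 / (d : ℝ) < p)
    (Q : SchwartzMap (EuclideanSpace ℝ (Fin d)) ℝ)
    (hQpos : ∀ x, 0 < Q x)
    (hQeq : ∀ x, -lapR (⇑Q) x + Q x - Q x ^ p = 0) :
    energy p (fun x => (Q x : ℂ)) =
        (((d : ℝ) * (p - 1) - 4) / (2 * (d : ℝ) * (p - 1))) * ∫ x, ‖fderiv ℝ (⇑Q) x‖ ^ 2 ∧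
    0 < energy p (fun x => (Q x : ℂ)) ∧
    virialK p (fun x => (Q x : ℂ)) = 0 := by
  have hd' : (0 : ℝ) < d := Nat.cast_pos.2 hd
  have h4d : 4 / (d : ℝ) < p - 1 := by linarith
  have hp : 0 < p - 1 := (by positivity : (0 : ℝ) < 4 / d).trans h4d
  have hp' : 0 < p + 1 := by linarith
  have hdp : 4 < (d : ℝ) * (p - 1) := by rwa [div_lt_iff₀ hd', mul_comm] at h4d
  have : Nonempty (Fin d) := ⟨⟨0, hd⟩⟩
  have hpohozaev := two_mul_integral_norm_fderiv_sq_eq_of_laplacian_eq (μ := volume) Q hQpos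
    fun x => by linarith [hQeq x, lapR_eq_laplacian Q x]
  rw [finrank_euclideanSpace_fin] at hpohozaev
  have hP : ∫ x, Q x ^ (p + 1) = 2 * (p + 1) / (d * (p - 1)) * ∫ x, ‖fderiv ℝ (⇑Q) x‖ ^ 2 := by
    field_simp
    linarith
  have hgrad := integral_norm_fderiv_sq_pos (μ := volume) (f := Q)
    fun h => (hQpos 0).ne' (by simp [h])
  have hE : energy p (fun x => (Q x : ℂ)) =
      (((d : ℝ) * (p - 1) - 4) / (2 * (d : ℝ) * (p - 1))) * ∫ x, ‖fderiv ℝ (⇑Q) x‖ ^ 2 := by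
    simp_rw [energy_ofReal p Q.differentiable, abs_of_pos (hQpos _), hP]
    field_simp
    ring
  refine ⟨hE, hE ▸ mul_pos (div_pos (by linarith) (by positivity)) hgrad, ?_⟩
  simp_rw [virialK_ofReal p Q.differentiable, abs_of_pos (hQpos _), hP]
  field_simp
  ring

/-- Energy of the ground state: `E(Q) = ((d(p-1)-4)/(2d(p-1))) ∫|∇Q|²`, so `E(Q) > 0`,
and the virial functional vanishes at `Q`. -/
theorem ground_state_energy
    (d : ℕ) (hd : 0 < d) (p : ℝ)
    (hp1 : 1 + 4 / (d : ℝ) < p)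
    (hp2 : 3 ≤ d → p < ((d : ℝ) + 2) / ((d : ℝ) - 2))
    (Q : SchwartzMap (EuclideanSpace ℝ (Fin d)) ℝ)
    (hQpos : ∀ x, 0 < Q x)
    (hQeq : ∀ x, -lapR (⇑Q) x + Q x - Q x ^ p = 0) :
    energy p (fun x => (Q x : ℂ)) =
        (((d : ℝ) * (p - 1) - 4) / (2 * (d : ℝ) * (p - 1))) * ∫ x, ‖fderiv ℝ (⇑Q) x‖ ^ 2 ∧
    0 < energy p (fun x => (Q x : ℂ)) ∧
    virialK p (fun x => (Q x : ℂ)) = 0 :=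
  ground_state_energy_general d hd p hp1 Q hQpos hQeq
end

section
/- Let t₁ < t₂ be real numbers, c > 0, R > 0, let J : [t₁, t₂] → ℝ be twice continuously differentiable, and let m : [t₁, t₂] → ℝ be continuous with m(t) < 0 for all t ∈ [t₁, t₂]. Assume J''(t) ≤ c · m(t) for all t ∈ [t₁, t₂], and |J'(t₁)| ≤ R·|m(t₁)| and |J'(t₂)| ≤ R·|m(t₂)|. Then ∫_{t₁}^{t₂} |m(t)| dt ≤ (R/c) · (|m(t₁)| + |m(t₂)|). -/
open MeasureTheory intervalIntegral

/-- Quantitative core of Lemma 5.7: integrating `J'' ≤ c·m` over `[t₁,t₂]` together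
with endpoint bounds `|J'(tᵢ)| ≤ R·|m(tᵢ)|` controls `∫ |m|` by its endpoint values. -/
theorem integral_abs_le_of_second_deriv_le
    (t₁ t₂ : ℝ) (h12 : t₁ < t₂) (c R : ℝ) (hc : 0 < c) (hR : 0 < R)
    (J J' J'' m : ℝ → ℝ)
    (hJ' : ∀ t ∈ Set.Icc t₁ t₂, HasDerivAt J (J' t) t)
    (hJ'' : ∀ t ∈ Set.Icc t₁ t₂, HasDerivAt J' (J'' t) t)
    (hJ''cont : ContinuousOn J'' (Set.Icc t₁ t₂))
    (hm : ContinuousOn m (Set.Icc t₁ t₂))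
    (hmneg : ∀ t ∈ Set.Icc t₁ t₂, m t < 0)
    (hle : ∀ t ∈ Set.Icc t₁ t₂, J'' t ≤ c * m t)
    (h1 : |J' t₁| ≤ R * |m t₁|)
    (h2 : |J' t₂| ≤ R * |m t₂|) :
    (∫ t in t₁..t₂, |m t|) ≤ (R / c) * (|m t₁| + |m t₂|) := by
  have hle12 : t₁ ≤ t₂ := h12.le
  have huIcc : Set.uIcc t₁ t₂ = Set.Icc t₁ t₂ := Set.uIcc_of_le hle12
  have hJ''int : IntervalIntegrable J'' volume t₁ t₂ :=
    (huIcc ▸ hJ''cont : ContinuousOn J'' (Set.uIcc t₁ t₂)).intervalIntegrable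
  have hmint : IntervalIntegrable m volume t₁ t₂ :=
    (huIcc ▸ hm : ContinuousOn m (Set.uIcc t₁ t₂)).intervalIntegrable
  have hftc : ∫ t in t₁..t₂, J'' t = J' t₂ - J' t₁ := by
    apply intervalIntegral.integral_eq_sub_of_hasDerivAt
    · intro t ht; exact hJ'' t (huIcc ▸ ht)
    · exact hJ''int
  have hmono : ∫ t in t₁..t₂, J'' t ≤ ∫ t in t₁..t₂, c * m t :=
    intervalIntegral.integral_mono_on hle12 hJ''int (hmint.const_mul c) hle
  have hcm : ∫ t in t₁..t₂, c * m t = c * ∫ t in t₁..t₂, m t := by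
    simp [intervalIntegral.integral_const_mul]
  have habs : ∫ t in t₁..t₂, |m t| = - ∫ t in t₁..t₂, m t := by
    rw [← intervalIntegral.integral_neg]
    apply intervalIntegral.integral_congr
    intro t ht
    exact abs_of_neg (hmneg t (huIcc ▸ ht))
  have key : c * ∫ t in t₁..t₂, |m t| ≤ R * (|m t₁| + |m t₂|) := by
    have h3 : J' t₂ - J' t₁ ≥ -(R * |m t₁| + R * |m t₂|) := by
      linarith [neg_abs_le (J' t₂), le_abs_self (J' t₁)]
    have : -(R * |m t₁| + R * |m t₂|) ≤ c * ∫ t in t₁..t₂, m t := by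
      calc -(R * |m t₁| + R * |m t₂|) ≤ J' t₂ - J' t₁ := h3
        _ = ∫ t in t₁..t₂, J'' t := hftc.symm
        _ ≤ c * ∫ t in t₁..t₂, m t := hcm ▸ hmono
    rw [habs]; linarith
  have hint_nonneg : (0:ℝ) ≤ ∫ t in t₁..t₂, |m t| := by
    apply intervalIntegral.integral_nonneg hle12
    intro t ht; exact abs_nonneg _
  rw [div_mul_eq_mul_div, le_div_iff₀ hc]
  nlinarith [key]
end
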